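/- Let H(n) > 0 be a positive-definite block Hankel matrix with p×p blocks, partitioned as H(k+1) = [[H(k), H12],[H21, H_{2k}]], and let t_{k+1} = (H_{2k} - H21 T(k) H12)^{-1} be the inverse Schur complement, where T(k) = H(k)^{-1}. With ω_k := P_2 T(k+1) Π(k+1) and J = [[0,I_p],[I_p,0]], one has i ω_k J ω_{k-1}* = t_{k+1} for 0 < k < n. -/

import Mathlib

open Matrix
open scoped ComplexOrder

noncomputable section

/-- The 2p×2p matrix J = [[0, I_p],[I_p, 0]]. -/
def Jmat (p : ℕ) : Matrix (Fin p ⊕ Fin p) (Fin p ⊕ Fin p) ℂ :=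
  Matrix.fromBlocks 0 1 1 0

/-- The m×m block Hankel matrix H(m) = {H_{i+j-2}}_{i,j=1}^m built from the
p×p blocks `Hk 0, Hk 1, ...`. -/
def Hmat (p : ℕ) (Hk : ℕ → Matrix (Fin p) (Fin p) ℂ) (m : ℕ) :
    Matrix (Fin m × Fin p) (Fin m × Fin p) ℂ :=
  fun x y => Hk ((x.1 : ℕ) + (y.1 : ℕ)) x.2 y.2

/-- The block lower shift matrix A (I_p on the block subdiagonal). -/
def Amat (p m : ℕ) : Matrix (Fin m × Fin p) (Fin m × Fin p) ℂ :=
  fun x y => if (x.1 : ℕ) = (y.1 : ℕ) + 1 ∧ x.2 = y.2 then 1 else 0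

/-- Φ₁(m) = -i · col(0, H_0, H_1, ..., H_{m-2}). -/
def Phi1 (p : ℕ) (Hk : ℕ → Matrix (Fin p) (Fin p) ℂ) (m : ℕ) :
    Matrix (Fin m × Fin p) (Fin p) ℂ :=
  fun x b => if (x.1 : ℕ) = 0 then 0 else -Complex.I * Hk ((x.1 : ℕ) - 1) x.2 b

/-- Φ₂(m) = col(I_p, 0, ..., 0). -/
def Phi2 (p m : ℕ) : Matrix (Fin m × Fin p) (Fin p) ℂ :=
  fun x b => if (x.1 : ℕ) = 0 ∧ x.2 = b then 1 else 0

/-- Π(m) = [Φ₁(m), Φ₂(m)]. -/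
def Pmat (p : ℕ) (Hk : ℕ → Matrix (Fin p) (Fin p) ℂ) (m : ℕ) :
    Matrix (Fin m × Fin p) (Fin p ⊕ Fin p) ℂ :=
  Matrix.fromCols (Phi1 p Hk m) (Phi2 p m)

/-- The block row P₂ = [0, ..., 0, I_p] ∈ ℂ^{p×mp}. -/
def P2 (p m : ℕ) : Matrix (Fin p) (Fin m × Fin p) ℂ :=
  fun a y => if (y.1 : ℕ) = m - 1 ∧ a = y.2 then 1 else 0

/-- The Verblunsky-type coefficients ω_k = P₂ T(k+1) Π(k+1) of a block Hankel matrix. -/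
def omegaV (p : ℕ) (Hk : ℕ → Matrix (Fin p) (Fin p) ℂ) (k : ℕ) :
    Matrix (Fin p) (Fin p ⊕ Fin p) ℂ :=
  P2 p (k + 1) * (Hmat p Hk (k + 1))⁻¹ * Pmat p Hk (k + 1)

/-- The off-diagonal block H12 of the partition H(k+1) = [[H(k), H12],[H21, H_{2k}]]. -/
def H12blk (p : ℕ) (Hk : ℕ → Matrix (Fin p) (Fin p) ℂ) (k : ℕ) :
    Matrix (Fin k × Fin p) (Fin p) ℂ :=
  fun x b => Hk (k + (x.1 : ℕ)) x.2 b

/-- t_{k+1} = (H_{2k} - H21 T(k) H12)⁻¹, the inverse Schur complement. -/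
def tmat (p : ℕ) (Hk : ℕ → Matrix (Fin p) (Fin p) ℂ) (k : ℕ) :
    Matrix (Fin p) (Fin p) ℂ :=
  (Hk (2 * k) - (H12blk p Hk k)ᴴ * (Hmat p Hk k)⁻¹ * H12blk p Hk k)⁻¹

/-!
Write T = H(k+1)⁻¹ and S = H(k)⁻¹, so that i ω_k J ω_{k-1}* = P₂ T (i Π(k+1) J Π(k)*) S P₂*.
The middle factor is the displacement (A H(k+1) - H(k+1) Aᵀ) E of the Hankel matrix, where E
embeds the first k block coordinates into the first k + 1. Since P₂ Aᵀ = 0,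
H(k+1) E = E H(k) + P₂* H21, A E P₂* = P₂* and A P₂* = 0, the whole product collapses to the
corner P₂ T P₂* of the inverse, which is the inverse Schur complement t_{k+1}.
-/

/-- Think of `E`, `R` as the inclusions of two complementary blocks and of `Q` as the projection
onto the second; then `hME` and `hMR` say that `M = [[A, B], [C, D]]`. -/
theorem Matrix.inv_schurComplement_eq_mul_inv_mul {N m q α : Type*} [Fintype N] [DecidableEq N]
    [Fintype m] [DecidableEq m] [Fintype q] [DecidableEq q] [CommRing α] {M : Matrix N N α}
    {E : Matrix N m α} {R : Matrix N q α} {Q : Matrix q N α} {A : Matrix m m α}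
    {B : Matrix m q α} {C : Matrix q m α} {D : Matrix q q α} (hM : IsUnit M.det)
    (hA : IsUnit A.det) (hQE : Q * E = 0) (hQR : Q * R = 1) (hME : M * E = E * A + R * C)
    (hMR : M * R = E * B + R * D) : (D - C * A⁻¹ * B)⁻¹ = Q * M⁻¹ * R := by
  set X := Q * M⁻¹
  have hXE : X * E = -(X * R * C * A⁻¹) := by
    have h0 : X * E * A + X * R * C = 0 := by
      rw [Matrix.mul_assoc X E, Matrix.mul_assoc X R, ← Matrix.mul_add, ← hME, Matrix.mul_assoc,
        nonsing_inv_mul_cancel_left _ _ hM, hQE]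
    rw [eq_neg_iff_add_eq_zero, ← mul_nonsing_inv_cancel_right _ (X * E) hA, ← Matrix.add_mul, h0,
      Matrix.zero_mul]
  refine Matrix.inv_eq_left_inv ?_
  calc X * R * (D - C * A⁻¹ * B) = X * E * B + X * R * D := by
        simp only [hXE, Matrix.mul_sub, Matrix.neg_mul, Matrix.mul_assoc]; abel
    _ = 1 := by
        rw [Matrix.mul_assoc X E, Matrix.mul_assoc X R, ← Matrix.mul_add, ← hMR, Matrix.mul_assoc,
          nonsing_inv_mul_cancel_left _ _ hM, hQR]

def blockEmb (p k : ℕ) : Matrix (Fin (k + 1) × Fin p) (Fin k × Fin p) ℂ :=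
  fun x y => if x = (y.1.castSucc, y.2) then 1 else 0

section Selectors

variable {p k : ℕ} {X : Type*}

lemma P2_succ_apply (a : Fin p) (y : Fin (k + 1) × Fin p) :
    P2 p (k + 1) a y = if y = (Fin.last k, a) then 1 else 0 := by
  simp only [P2, Prod.ext_iff, Fin.ext_iff, Fin.val_last, add_tsub_cancel_right, eq_comm (a := a)]

lemma P2_succ_mul_apply (M : Matrix (Fin (k + 1) × Fin p) X ℂ) (a : Fin p) (y : X) :
    (P2 p (k + 1) * M) a y = M (Fin.last k, a) y := by
  simp [Matrix.mul_apply, P2_succ_apply]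

lemma mul_P2_succ_conjTranspose_apply (M : Matrix X (Fin (k + 1) × Fin p) ℂ) (x : X)
    (a : Fin p) : (M * (P2 p (k + 1))ᴴ) x a = M x (Fin.last k, a) := by
  simp [Matrix.mul_apply, P2_succ_apply]

lemma mul_blockEmb_apply (M : Matrix X (Fin (k + 1) × Fin p) ℂ) (x : X)
    (y : Fin k × Fin p) : (M * blockEmb p k) x y = M x (y.1.castSucc, y.2) := by
  simp [Matrix.mul_apply, blockEmb]

lemma blockEmb_mul_apply_castSucc (M : Matrix (Fin k × Fin p) X ℂ) (i : Fin k) (a : Fin p)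
    (y : X) : (blockEmb p k * M) (i.castSucc, a) y = M (i, a) y := by
  simp [Matrix.mul_apply, blockEmb, Fintype.sum_prod_type, ite_and]

lemma blockEmb_mul_apply_last (M : Matrix (Fin k × Fin p) X ℂ) (a : Fin p) (y : X) :
    (blockEmb p k * M) (Fin.last k, a) y = 0 := by
  simp [Matrix.mul_apply, blockEmb, (Fin.castSucc_ne_last _).symm]

lemma P2_succ_conjTranspose_mul_apply_castSucc (M : Matrix (Fin p) X ℂ) (i : Fin k)
    (a : Fin p) (y : X) : ((P2 p (k + 1))ᴴ * M) (i.castSucc, a) y = 0 := by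
  simp [Matrix.mul_apply, P2_succ_apply]

lemma P2_succ_conjTranspose_mul_apply_last (M : Matrix (Fin p) X ℂ) (a : Fin p) (y : X) :
    ((P2 p (k + 1))ᴴ * M) (Fin.last k, a) y = M a y := by
  simp [Matrix.mul_apply, P2_succ_apply]

lemma P2_succ_mul_P2_succ_conjTranspose : P2 p (k + 1) * (P2 p (k + 1))ᴴ = 1 := by
  ext a b
  simp [P2_succ_mul_apply, P2_succ_apply, Matrix.one_apply]

lemma P2_succ_mul_blockEmb : P2 p (k + 1) * blockEmb p k = 0 := by
  ext a y
  simp [P2_succ_mul_apply, blockEmb, (Fin.castSucc_ne_last _).symm]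

lemma P2_succ_mul_Amat_transpose : P2 p (k + 1) * (Amat p (k + 1))ᵀ = 0 := by
  ext a y
  simp [P2_succ_mul_apply, Amat]
  omega

lemma Amat_mul_P2_succ_conjTranspose : Amat p (k + 1) * (P2 p (k + 1))ᴴ = 0 := by
  ext x a
  simp [mul_P2_succ_conjTranspose_apply, Amat]
  omega

lemma Amat_mul_blockEmb_mul_P2_conjTranspose :
    Amat p (k + 2) * blockEmb p (k + 1) * (P2 p (k + 1))ᴴ = (P2 p (k + 2))ᴴ := by
  ext x a
  simp [mul_P2_succ_conjTranspose_apply, mul_blockEmb_apply, Amat, P2_succ_apply, Prod.ext_iff,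
    Fin.ext_iff]

lemma Amat_mul_apply {m : ℕ} (M : Matrix (Fin m × Fin p) X ℂ) (i : Fin m) (a : Fin p) (z : X) :
    (Amat p m * M) (i, a) z = if h : (i : ℕ) = 0 then 0 else M (⟨i - 1, by omega⟩, a) z := by
  split_ifs with h
  · simp [Matrix.mul_apply, Amat, h]
  · rw [Matrix.mul_apply, Fintype.sum_eq_single (⟨i - 1, by omega⟩, a)]
    · simp [Amat, Nat.sub_add_cancel (Nat.pos_of_ne_zero h)]
    · rintro ⟨l, c⟩ hlc
      simp only [Amat, ite_mul, one_mul, zero_mul, ite_eq_right_iff, and_imp]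
      rintro hl rfl
      exact (hlc (Prod.ext (Fin.ext (by simp; omega)) rfl)).elim

lemma mul_Amat_transpose_apply {m : ℕ} (M : Matrix X (Fin m × Fin p) ℂ) (x : X) (j : Fin m)
    (b : Fin p) :
    (M * (Amat p m)ᵀ) x (j, b) = if h : (j : ℕ) = 0 then 0 else M x (⟨j - 1, by omega⟩, b) := by
  rw [← transpose_transpose (M * _), transpose_apply, transpose_mul, transpose_transpose,
    Amat_mul_apply]
  rfl

lemma Phi2_mul_apply {m : ℕ} (M : Matrix (Fin p) X ℂ) (i : Fin m) (a : Fin p) (y : X) :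
    (Phi2 p m * M) (i, a) y = if (i : ℕ) = 0 then M a y else 0 := by
  split_ifs with h <;> simp [Matrix.mul_apply, Phi2, h]

lemma mul_Phi2_conjTranspose_apply {m : ℕ} (M : Matrix X (Fin p) ℂ) (x : X) (j : Fin m)
    (b : Fin p) : (M * (Phi2 p m)ᴴ) x (j, b) = if (j : ℕ) = 0 then M x b else 0 := by
  split_ifs with h <;> simp [Matrix.mul_apply, Phi2, h]

end Selectors

section Hankel

variable {p : ℕ} {Hk : ℕ → Matrix (Fin p) (Fin p) ℂ}

lemma Hmat_posDef_of_le {m n : ℕ} (h : m ≤ n)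
    (hpos : (Hmat p Hk n).PosDef) : (Hmat p Hk m).PosDef :=
  hpos.submatrix (e := Prod.map (Fin.castLE h) id)
    ((Fin.castLE_injective h).prodMap Function.injective_id)

lemma Hmat_succ_mul_blockEmb (hHerm : ∀ t, (Hk t).IsHermitian) (k : ℕ) :
    Hmat p Hk (k + 1) * blockEmb p k
      = blockEmb p k * Hmat p Hk k + (P2 p (k + 1))ᴴ * (H12blk p Hk k)ᴴ := by
  ext ⟨i, a⟩ ⟨j, b⟩
  induction i using Fin.lastCases with
  | last =>
    simp [mul_blockEmb_apply, blockEmb_mul_apply_last, P2_succ_conjTranspose_mul_apply_last,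
      Hmat]
    exact ((hHerm _).apply _ _).symm
  | cast i =>
    simp [mul_blockEmb_apply, blockEmb_mul_apply_castSucc,
      P2_succ_conjTranspose_mul_apply_castSucc, Hmat]

lemma Hmat_succ_mul_P2_succ_conjTranspose (k : ℕ) :
    Hmat p Hk (k + 1) * (P2 p (k + 1))ᴴ
      = blockEmb p k * H12blk p Hk k + (P2 p (k + 1))ᴴ * Hk (2 * k) := by
  ext ⟨i, a⟩ b
  induction i using Fin.lastCases with
  | last =>
    simp [mul_P2_succ_conjTranspose_apply, blockEmb_mul_apply_last,
      P2_succ_conjTranspose_mul_apply_last, Hmat, two_mul]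
  | cast i =>
    simp [mul_P2_succ_conjTranspose_apply, blockEmb_mul_apply_castSucc,
      P2_succ_conjTranspose_mul_apply_castSucc, Hmat, H12blk, add_comm]

lemma I_smul_Pmat_mul_Jmat_mul_Pmat_conjTranspose (hHerm : ∀ t, (Hk t).IsHermitian) (k : ℕ) :
    Complex.I • (Pmat p Hk (k + 1) * Jmat p * (Pmat p Hk k)ᴴ)
      = (Amat p (k + 1) * Hmat p Hk (k + 1) - Hmat p Hk (k + 1) * (Amat p (k + 1))ᵀ)
          * blockEmb p k := by
  rw [Pmat, Pmat, Jmat, conjTranspose_fromCols_eq_fromRows_conjTranspose,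
    fromCols_mul_fromBlocks, fromCols_mul_fromRows]
  ext ⟨i, a⟩ ⟨j, b⟩
  simp [mul_blockEmb_apply, Amat_mul_apply, mul_Amat_transpose_apply, Phi2_mul_apply,
    mul_Phi2_conjTranspose_apply, Phi1, Hmat]
  have hconj (t : ℕ) : starRingEnd ℂ (Hk t b a) = Hk t a b := (hHerm t).apply a b
  split_ifs with hi hj hj <;> simp [hconj, ← mul_assoc, hi, hj]
  rw [Fin.ext_iff, Fin.val_zero] at hi
  rw [show (i : ℕ) - 1 + j = i + (j - 1) by omega, sub_self]

lemma P2_mul_inv_mul_displacement_mul_inv_mul (hHerm : ∀ t, (Hk t).IsHermitian) (k : ℕ)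
    (hH : IsUnit (Hmat p Hk (k + 2)).det) (hH' : IsUnit (Hmat p Hk (k + 1)).det) :
    P2 p (k + 2) * (Hmat p Hk (k + 2))⁻¹
        * ((Amat p (k + 2) * Hmat p Hk (k + 2) - Hmat p Hk (k + 2) * (Amat p (k + 2))ᵀ)
          * blockEmb p (k + 1)) * (Hmat p Hk (k + 1))⁻¹ * (P2 p (k + 1))ᴴ
      = P2 p (k + 2) * (Hmat p Hk (k + 2))⁻¹ * (P2 p (k + 2))ᴴ := by
  set H := Hmat p Hk (k + 2)
  set A := Amat p (k + 2)
  set Y := blockEmb p (k + 1) * (Hmat p Hk (k + 1))⁻¹ * (P2 p (k + 1))ᴴ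
  have hAHY : A * H * Y = (P2 p (k + 2))ᴴ := by
    rw [Matrix.mul_assoc A, ← Matrix.mul_assoc H, ← Matrix.mul_assoc H,
      Hmat_succ_mul_blockEmb hHerm, Matrix.add_mul, Matrix.add_mul,
      mul_nonsing_inv_cancel_right _ _ hH', Matrix.mul_add,
      ← Matrix.mul_assoc, Amat_mul_blockEmb_mul_P2_conjTranspose, Matrix.mul_assoc,
      Matrix.mul_assoc, ← Matrix.mul_assoc A, Amat_mul_P2_succ_conjTranspose, Matrix.zero_mul,
      add_zero]
  have hHAY : P2 p (k + 2) * H⁻¹ * (H * Aᵀ * Y) = 0 := by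
    rw [Matrix.mul_assoc, Matrix.mul_assoc H, nonsing_inv_mul_cancel_left _ _ hH,
      ← Matrix.mul_assoc, P2_succ_mul_Amat_transpose, Matrix.zero_mul]
  calc _ = P2 p (k + 2) * H⁻¹ * (A * H * Y) - P2 p (k + 2) * H⁻¹ * (H * Aᵀ * Y) := by
        simp only [Y, Matrix.mul_sub, Matrix.sub_mul, Matrix.mul_assoc]
    _ = _ := by rw [hAHY, hHAY, sub_zero]

end Hankel

/-- i ω_k J ω_{k-1}* = t_{k+1} for 0 < k < n. -/
theorem verblunsky_pairing_eq_schur (n p : ℕ)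
    (Hk : ℕ → Matrix (Fin p) (Fin p) ℂ)
    (hself : ∀ k, (Hk k)ᴴ = Hk k)
    (hpos : (Hmat p Hk n).PosDef) :
    ∀ k, 0 < k → k < n →
      Complex.I • (omegaV p Hk k * Jmat p * (omegaV p Hk (k - 1))ᴴ) = tmat p Hk k := by
  intro k hk hkn
  obtain ⟨m, rfl⟩ : ∃ m, k = m + 1 := ⟨k - 1, by omega⟩
  have hdet {j : ℕ} (hj : j ≤ n) : IsUnit (Hmat p Hk j).det :=
    (isUnit_iff_isUnit_det _).mp (Hmat_posDef_of_le hj hpos).isUnit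
  have hT : IsUnit (Hmat p Hk (m + 2)).det := hdet hkn
  have hS : IsUnit (Hmat p Hk (m + 1)).det := hdet (by omega)
  have hSherm : ((Hmat p Hk (m + 1))⁻¹)ᴴ = (Hmat p Hk (m + 1))⁻¹ :=
    (Hmat_posDef_of_le (by omega) hpos).isHermitian.inv
  calc Complex.I • (omegaV p Hk (m + 1) * Jmat p * (omegaV p Hk (m + 1 - 1))ᴴ)
      = P2 p (m + 2) * (Hmat p Hk (m + 2))⁻¹
          * (Complex.I • (Pmat p Hk (m + 2) * Jmat p * (Pmat p Hk (m + 1))ᴴ))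
          * (Hmat p Hk (m + 1))⁻¹ * (P2 p (m + 1))ᴴ := by
        simp [omegaV, conjTranspose_mul, hSherm, Matrix.mul_assoc]
    _ = P2 p (m + 2) * (Hmat p Hk (m + 2))⁻¹ * (P2 p (m + 2))ᴴ := by
        rw [I_smul_Pmat_mul_Jmat_mul_Pmat_conjTranspose hself,
          P2_mul_inv_mul_displacement_mul_inv_mul hself m hT hS]
    _ = tmat p Hk (m + 1) :=
        (Matrix.inv_schurComplement_eq_mul_inv_mul hT hS P2_succ_mul_blockEmb
          P2_succ_mul_P2_succ_conjTranspose (Hmat_succ_mul_blockEmb hself _)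
          (Hmat_succ_mul_P2_succ_conjTranspose _)).symm
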